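/- Let q be an odd prime power, d ≥ 1, and let a₁, …, a_T, together with a nonempty set S of vectors in (𝔽_q*)^d, satisfy: φ_d(a_i, a_j) = α_i for all 1 ≤ i < j ≤ T and φ_d(a_i, s) = α_i for all i and all s ∈ S (so S ∪ {a₁,…,a_T} contains a falling-star-like structure). If additionally S itself is a t-falling star, then rk(S ∪ {a₁,…,a_T}) ≥ T + t − 1. In particular d ≥ T + t − 1. -/
import Mathlib


open Finset

namespace EG

/-- The color set `C_d = DOT ⊔ ZERO ⊔ UP ⊔ DOWN`, where `DOT = 𝔽_q*` and
`ZERO`, `UP`, `DOWN` are copies of `{1,…,d} × 𝔽_q`. -/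
inductive Color (d : ℕ) (F : Type) [Zero F] where
  | dot  : {a : F // a ≠ 0} → Color d F
  | zero : Fin d → F → Color d F
  | up   : Fin d → F → Color d F
  | down : Fin d → F → Color d F

variable {F : Type} [Field F] [Fintype F] [LinearOrder F] {d : ℕ} [NeZero d]

/-- The standard dot product. -/
def dotp (x y : Fin d → F) : F := ∑ i, x i * y i

/-- Lexicographic order on vectors induced by the linear order on `F`. -/
def lexLt (x y : Fin d → F) : Prop :=
  ∃ i, (∀ j, j < i → x j = y j) ∧ x i < y i

/-- The first coordinate at which `x` and `y` differ. -/
noncomputable def firstDiff (x y : Fin d → F) : Fin d :=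
  if h : (Finset.univ.filter fun i => x i ≠ y i).Nonempty then
    (Finset.univ.filter fun i => x i ≠ y i).min' h
  else ⟨0, Nat.pos_of_ne_zero (NeZero.ne d)⟩

/-- The Modified Dot Product coloring, defined for `x` lexicographically below `y`. -/
noncomputable def phiAux (x y : Fin d → F) : Color d F :=
  if h0 : dotp x y = 0 then
    .zero (firstDiff x y) (x (firstDiff x y) + y (firstDiff x y))
  else if dotp x y = dotp x x then
    .up (firstDiff x y) (x (firstDiff x y) + y (firstDiff x y))
  else if dotp x y = dotp y y then
    .down (firstDiff x y) (x (firstDiff x y) + y (firstDiff x y))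
  else .dot ⟨dotp x y, h0⟩

open scoped Classical in
/-- The Modified Dot Product coloring `φ_d`, as a symmetric function. -/
noncomputable def phi (x y : Fin d → F) : Color d F :=
  if lexLt x y then phiAux x y else phiAux y x

/-- Membership in `(𝔽_q*)^d`: all coordinates nonzero. -/
def NZ (x : Fin d → F) : Prop := ∀ i, x i ≠ 0

/-- `T` contains a `t`-falling star under the coloring `f`. -/
def IsFallingStar (f : (Fin d → F) → (Fin d → F) → Color d F)
    (T : Set (Fin d → F)) (t : ℕ) : Prop :=
  ∃ s : Fin t → (Fin d → F), Function.Injective s ∧ (∀ i, s i ∈ T) ∧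
    ∃ α : Fin t → Color d F, ∀ i j : Fin t, j < i → f (s i) (s j) = α i


set_option linter.unusedSectionVars false

/-! ### Helper lemmas -/

lemma dotp_comm (x y : Fin d → F) : dotp x y = dotp y x := by
  simp [dotp, mul_comm]

lemma dotp_sum {k : ℕ} (w : Fin d → F) (c : Fin k → F) (v : Fin k → Fin d → F) :
    dotp w (∑ i, c i • v i) = ∑ i, c i * dotp w (v i) := by
  simp only [dotp, Finset.sum_apply, Pi.smul_apply, smul_eq_mul, Finset.mul_sum]
  rw [Finset.sum_comm]
  exact Finset.sum_congr rfl fun i _ => Finset.sum_congr rfl fun j _ => by ring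

lemma diff_nonempty {x y : Fin d → F} (h : x ≠ y) :
    (Finset.univ.filter fun i => x i ≠ y i).Nonempty := by
  by_contra hc
  apply h; funext j
  by_contra hj
  exact hc ⟨j, Finset.mem_filter.2 ⟨Finset.mem_univ _, hj⟩⟩

lemma firstDiff_spec {x y : Fin d → F} (h : x ≠ y) :
    x (firstDiff x y) ≠ y (firstDiff x y) := by
  have hne := diff_nonempty h
  have hmem := (Finset.univ.filter fun i => x i ≠ y i).min'_mem hne
  rw [firstDiff, dif_pos hne]
  exact (Finset.mem_filter.1 hmem).2

lemma firstDiff_symm (x y : Fin d → F) : firstDiff x y = firstDiff y x := by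
  have hfe : (Finset.univ.filter fun i => x i ≠ y i)
      = (Finset.univ.filter fun i => y i ≠ x i) := by
    apply Finset.filter_congr; intro i _; simp [ne_comm]
  simp only [firstDiff, hfe]

/-- The coordinate data of a color. -/
def coordOf : Color d F → Option (Fin d × F)
  | .dot _ => none
  | .zero i c => some (i, c)
  | .up i c => some (i, c)
  | .down i c => some (i, c)

lemma phiAux_cases (x y : Fin d → F) :
    (∃ u : {a : F // a ≠ 0}, phiAux x y = .dot u ∧ dotp x y = u.val ∧
      dotp x y ≠ dotp x x ∧ dotp x y ≠ dotp y y)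
    ∨ (∃ c : F, coordOf (phiAux x y) = some (firstDiff x y, c) ∧
        c = x (firstDiff x y) + y (firstDiff x y)) := by
  unfold phiAux
  split_ifs with h0 h1 h2
  · right; exact ⟨_, rfl, rfl⟩
  · right; exact ⟨_, rfl, rfl⟩
  · right; exact ⟨_, rfl, rfl⟩
  · left; exact ⟨⟨_, h0⟩, rfl, rfl, h1, h2⟩

lemma phi_cases (x y : Fin d → F) :
    (∃ u : {a : F // a ≠ 0}, phi x y = .dot u ∧ dotp x y = u.val ∧
      dotp x y ≠ dotp x x ∧ dotp x y ≠ dotp y y)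
    ∨ (∃ c : F, coordOf (phi x y) = some (firstDiff x y, c) ∧
        c = x (firstDiff x y) + y (firstDiff x y)) := by
  classical
  rw [phi]
  split_ifs with h
  · exact phiAux_cases x y
  · rcases phiAux_cases y x with ⟨u, h1, h2, h3, h4⟩ | ⟨c, h1, h2⟩
    · left
      refine ⟨u, h1, ?_, ?_, ?_⟩
      · rw [dotp_comm]; exact h2
      · rw [dotp_comm]; exact h4
      · rw [dotp_comm]; exact h3
    · right
      refine ⟨c, ?_, ?_⟩
      · rw [firstDiff_symm x y]; exact h1
      · rw [firstDiff_symm x y, h2, add_comm]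

lemma phi_eq_dot {x y : Fin d → F} {u : {a : F // a ≠ 0}} (h : phi x y = .dot u) :
    dotp x y = u.val ∧ dotp x y ≠ dotp x x ∧ dotp x y ≠ dotp y y := by
  rcases phi_cases x y with ⟨u', h1, h2⟩ | ⟨c, h1, h2⟩
  · obtain rfl : u' = u := by
      have := h1.symm.trans h
      injection this
    exact h2
  · exfalso
    rw [h] at h1
    simp [coordOf] at h1

lemma phi_coord {x y : Fin d → F} (hxy : x ≠ y) {i : Fin d} {c : F}
    (h : coordOf (phi x y) = some (i, c)) :
    x i + y i = c ∧ x i ≠ y i := by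
  rcases phi_cases x y with ⟨u, h1, h2⟩ | ⟨c', h1, h2⟩
  · rw [h1] at h; simp [coordOf] at h
  · rw [h1] at h
    obtain ⟨hi, hc⟩ : firstDiff x y = i ∧ c' = c := by
      simpa [Prod.ext_iff] using h
    subst hi; subst hc
    exact ⟨h2.symm, firstDiff_spec hxy⟩

/-- Key extension lemma: if `b` sees all of `v` in a constant color, and a witness `w`
sees `b` and all of `v` in one constant color, then `b` is not in the span of `v`. -/
lemma ext_lemma {k : ℕ} (v : Fin k → (Fin d → F)) (b w : Fin d → F)
    (hb : NZ b) (hwb : w ≠ b) (hwv : ∀ i, w ≠ v i) (hbv : ∀ i, b ≠ v i)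
    (γ δ : Color d F)
    (h1 : phi w b = γ) (h2 : ∀ i, phi w (v i) = γ) (h3 : ∀ i, phi b (v i) = δ) :
    b ∉ Submodule.span F (Set.range v) := by
  intro hmem
  obtain ⟨c, hc⟩ := (Submodule.mem_span_range_iff_exists_fun F).mp hmem
  rcases Nat.eq_zero_or_pos k with hk | hk
  · subst hk
    have hb0 : b = 0 := by rw [← hc]; simp
    exact hb ⟨0, Nat.pos_of_ne_zero (NeZero.ne d)⟩ (by rw [hb0]; rfl)
  have hpt : ∀ j : Fin d, b j = ∑ i, c i * v i j := by
    intro j; rw [← hc]; simp [Finset.sum_apply]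
  have hdp : ∀ x, dotp x b = ∑ i, c i * dotp x (v i) := by
    intro x; rw [← hc]; exact dotp_sum x c v
  set i0 : Fin k := ⟨0, hk⟩ with hi0
  have keyγ : (∃ u : {a : F // a ≠ 0}, γ = .dot u) ∨ (∃ i c', coordOf γ = some (i, c')) := by
    cases γ with
    | dot u => exact Or.inl ⟨u, rfl⟩
    | zero i c => exact Or.inr ⟨i, c, rfl⟩
    | up i c => exact Or.inr ⟨i, c, rfl⟩
    | down i c => exact Or.inr ⟨i, c, rfl⟩
  have keyδ : (∃ u : {a : F // a ≠ 0}, δ = .dot u) ∨ (∃ i c', coordOf δ = some (i, c')) := by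
    cases δ with
    | dot u => exact Or.inl ⟨u, rfl⟩
    | zero i c => exact Or.inr ⟨i, c, rfl⟩
    | up i c => exact Or.inr ⟨i, c, rfl⟩
    | down i c => exact Or.inr ⟨i, c, rfl⟩
  -- Step 1 : the coefficients sum to 1
  have hsum : ∑ i, c i = 1 := by
    rcases keyγ with ⟨u, rfl⟩ | ⟨i1, c1, hcd⟩
    · have hwb' := (phi_eq_dot h1).1
      have hwv' : ∀ i, dotp w (v i) = u.val := fun i => (phi_eq_dot (h2 i)).1
      have he : u.val = (∑ i, c i) * u.val := by
        calc u.val = dotp w b := hwb'.symm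
          _ = ∑ i, c i * dotp w (v i) := hdp w
          _ = ∑ i, c i * u.val := by
              exact Finset.sum_congr rfl fun i _ => by rw [hwv' i]
          _ = (∑ i, c i) * u.val := (Finset.sum_mul _ _ _).symm
      have := mul_right_cancel₀ u.2 (by rw [one_mul, ← he] : (1 : F) * u.val = (∑ i, c i) * u.val)
      exact this.symm
    · have hwbc := phi_coord hwb (by rw [h1]; exact hcd)
      have hwvc : ∀ i, w i1 + v i i1 = c1 ∧ w i1 ≠ v i i1 :=
        fun i => phi_coord (hwv i) (by rw [h2 i]; exact hcd)
      have hvb : ∀ i, v i i1 = b i1 :=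
        fun i => add_left_cancel ((hwvc i).1.trans hwbc.1.symm)
      have he : b i1 = (∑ i, c i) * b i1 := by
        calc b i1 = ∑ i, c i * v i i1 := hpt i1
          _ = ∑ i, c i * b i1 := Finset.sum_congr rfl fun i _ => by rw [hvb i]
          _ = (∑ i, c i) * b i1 := (Finset.sum_mul _ _ _).symm
      have := mul_right_cancel₀ (hb i1) (by rw [one_mul, ← he] : (1 : F) * b i1 = (∑ i, c i) * b i1)
      exact this.symm
  -- Step 2 : contradiction
  rcases keyδ with ⟨u, rfl⟩ | ⟨i1, c1, hcd⟩
  · have hbv' : ∀ i, dotp b (v i) = u.val := fun i => (phi_eq_dot (h3 i)).1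
    have hbb : dotp b b = u.val := by
      calc dotp b b = ∑ i, c i * dotp b (v i) := hdp b
        _ = ∑ i, c i * u.val := Finset.sum_congr rfl fun i _ => by rw [hbv' i]
        _ = (∑ i, c i) * u.val := (Finset.sum_mul _ _ _).symm
        _ = u.val := by rw [hsum, one_mul]
    exact (phi_eq_dot (h3 i0)).2.1 ((hbv' i0).trans hbb.symm)
  · have hbvc : ∀ i, b i1 + v i i1 = c1 ∧ b i1 ≠ v i i1 :=
      fun i => phi_coord (hbv i) (by rw [h3 i]; exact hcd)
    have hv : ∀ i, v i i1 = c1 - b i1 := fun i => by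
      have h := (hbvc i).1
      rw [add_comm] at h
      exact eq_sub_of_add_eq h
    have he : b i1 = c1 - b i1 := by
      calc b i1 = ∑ i, c i * v i i1 := hpt i1
        _ = ∑ i, c i * (c1 - b i1) := Finset.sum_congr rfl fun i _ => by rw [hv i]
        _ = (∑ i, c i) * (c1 - b i1) := (Finset.sum_mul _ _ _).symm
        _ = c1 - b i1 := by rw [hsum, one_mul]
    exact (hbvc i0).2 (by rw [hv i0, ← he])

/-- Iterating the extension lemma: a "falling" sequence of distinct nonzero-coordinate
vectors is linearly independent except possibly for its last element. -/
lemma falling_indep {N : ℕ} (u : Fin N → (Fin d → F)) (hnz : ∀ i, NZ (u i))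
    (hinj : Function.Injective u) (δ : Fin N → Color d F)
    (hfall : ∀ i j : Fin N, i < j → phi (u j) (u i) = δ j) :
    ∀ m, ∀ _ : m + 1 ≤ N, LinearIndependent F (fun i : Fin m => u ⟨i.val, by omega⟩) := by
  intro m
  induction m with
  | zero => intro _; exact linearIndependent_empty_type
  | succ n ih =>
    intro hm
    have hsnoc : (fun i : Fin (n + 1) => u ⟨i.val, by omega⟩)
        = Fin.snoc (fun i : Fin n => u ⟨i.val, by omega⟩) (u ⟨n, by omega⟩) := by
      funext i
      by_cases hi : (i : ℕ) < n
      · have hieq : i = Fin.castSucc ⟨i.val, hi⟩ := Fin.ext rfl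
        rw [hieq, Fin.snoc_castSucc]
        rfl
      · have hival : (i : ℕ) = n := by omega
        have hieq : i = Fin.last n := Fin.ext (by simpa using hival)
        rw [hieq, Fin.snoc_last]
        rfl
    rw [hsnoc, linearIndependent_fin_snoc]
    refine ⟨ih (by omega), ?_⟩
    have hnN : (⟨n, by omega⟩ : Fin N) < ⟨N - 1, by omega⟩ := by
      simp only [Fin.mk_lt_mk]; omega
    refine ext_lemma (fun i : Fin n => u ⟨i.val, by omega⟩) (u ⟨n, by omega⟩)
      (u ⟨N - 1, by omega⟩) (hnz _) ?_ ?_ ?_ (δ ⟨N - 1, by omega⟩) (δ ⟨n, by omega⟩) ?_ ?_ ?_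
    · intro h
      have := congrArg Fin.val (hinj h)
      simp only at this; omega
    · intro i h
      have := congrArg Fin.val (hinj h)
      simp only at this; omega
    · intro i h
      have := congrArg Fin.val (hinj h)
      simp only at this
      have := i.isLt; omega
    · exact hfall _ _ hnN
    · intro i
      exact hfall _ _ (by simp only [Fin.mk_lt_mk]; omega)
    · intro i
      exact hfall _ _ (by simp only [Fin.mk_lt_mk]; exact i.isLt)

/-- If `a₁, …, a_T` form a falling-star-like tower over a set `S ⊆ (𝔽_q*)^d` which is
itself a `t`-falling star, then `rk(S ∪ {a₁,…,a_T}) ≥ T + t - 1`; in particular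
`d ≥ T + t - 1`. -/
theorem tower_over_falling_star_rank (hodd : Odd (Fintype.card F))
    {T t : ℕ} (a : Fin T → (Fin d → F)) (hanz : ∀ i, NZ (a i))
    (hainj : Function.Injective a)
    (S : Set (Fin d → F)) (hSne : S.Nonempty) (hSnz : S ⊆ {x | NZ x})
    (haS : ∀ i, a i ∉ S)
    (α : Fin T → Color d F)
    (htower₁ : ∀ i j : Fin T, i < j → phi (a i) (a j) = α i)
    (htower₂ : ∀ i : Fin T, ∀ s ∈ S, phi (a i) s = α i)
    (hstar : ∃ s : Fin t → (Fin d → F), Function.Injective s ∧ S = Set.range s ∧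
      ∃ β : Fin t → Color d F, ∀ i j : Fin t, j < i → phi (s i) (s j) = β i) :
    T + t - 1 ≤ Set.finrank F (S ∪ Set.range a) ∧ T + t - 1 ≤ d := by
  classical
  obtain ⟨s, hsinj, rfl, β, hβ⟩ := hstar
  have ht : 0 < t := by
    obtain ⟨x, i, rfl⟩ := hSne
    exact i.pos
  set u : Fin (t + T) → (Fin d → F) := fun j =>
    if h : (j : ℕ) < t then s ⟨j.val, h⟩
    else a ⟨t + T - 1 - j.val, by have := j.isLt; omega⟩ with hu
  set δδ : Fin (t + T) → Color d F := fun j =>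
    if h : (j : ℕ) < t then β ⟨j.val, h⟩
    else α ⟨t + T - 1 - j.val, by have := j.isLt; omega⟩ with hδ
  have hnz : ∀ j, NZ (u j) := by
    intro j
    by_cases h : (j : ℕ) < t
    · have he : u j = s ⟨j.val, h⟩ := by simp only [hu]; rw [dif_pos h]
      rw [he]; exact hSnz (Set.mem_range_self _)
    · have he : u j = a ⟨t + T - 1 - j.val, by have := j.isLt; omega⟩ := by
        simp only [hu]; rw [dif_neg h]
      rw [he]; exact hanz _
  have hSa : ∀ (i : Fin t) (m : Fin T), s i ≠ a m := by
    intro i m h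
    exact haS m ⟨i, h⟩
  have hinj : Function.Injective u := by
    intro x y hxy
    simp only [hu] at hxy
    by_cases hx : (x : ℕ) < t <;> by_cases hy : (y : ℕ) < t
    · rw [dif_pos hx, dif_pos hy] at hxy
      have h1 := hsinj hxy
      rw [Fin.mk.injEq] at h1
      exact Fin.ext h1
    · rw [dif_pos hx, dif_neg hy] at hxy
      exact absurd hxy (hSa _ _)
    · rw [dif_neg hx, dif_pos hy] at hxy
      exact absurd hxy.symm (hSa _ _)
    · rw [dif_neg hx, dif_neg hy] at hxy
      have h1 := congrArg Fin.val (hainj hxy)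
      simp only at h1
      have := x.isLt; have := y.isLt
      exact Fin.ext (by omega)
  have hfall : ∀ i j : Fin (t + T), i < j → phi (u j) (u i) = δδ j := by
    intro i j hij
    have hij' : (i : ℕ) < (j : ℕ) := hij
    by_cases hjt : (j : ℕ) < t
    · have hit : (i : ℕ) < t := by omega
      simp only [hu, hδ]
      rw [dif_pos hjt, dif_pos hit, dif_pos hjt]
      exact hβ ⟨j.val, hjt⟩ ⟨i.val, hit⟩ hij'
    · by_cases hit : (i : ℕ) < t
      · simp only [hu, hδ]
        rw [dif_neg hjt, dif_pos hit, dif_neg hjt]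
        exact htower₂ _ _ (Set.mem_range_self _)
      · simp only [hu, hδ]
        rw [dif_neg hjt, dif_neg hit, dif_neg hjt]
        refine htower₁ _ _ ?_
        have := j.isLt
        exact Fin.mk_lt_mk.2 (by omega)
  have hLI := falling_indep u hnz hinj δδ hfall (t + T - 1) (by omega)
  have hrange : Set.range (fun i : Fin (t + T - 1) => u ⟨i.val, by have := i.isLt; omega⟩)
      ⊆ Set.range s ∪ Set.range a := by
    rintro x ⟨i, rfl⟩
    simp only [hu]
    by_cases h : ((⟨i.val, by have := i.isLt; omega⟩ : Fin (t + T)) : ℕ) < t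
    · rw [dif_pos h]; exact Or.inl (Set.mem_range_self _)
    · rw [dif_neg h]; exact Or.inr (Set.mem_range_self _)
  have hcard : Module.finrank F (Submodule.span F
      (Set.range (fun i : Fin (t + T - 1) => u ⟨i.val, by have := i.isLt; omega⟩))) = T + t - 1 := by
    rw [finrank_span_eq_card hLI]
    simp only [Fintype.card_fin]
    omega
  have hmono := Submodule.finrank_mono (R := F) (Submodule.span_mono hrange)
  rw [hcard] at hmono
  refine ⟨hmono, hmono.trans ?_⟩
  exact (Submodule.finrank_le _).trans_eq (Module.finrank_fin_fun F)

end EG
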